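/- arXiv:2108.11045 — 2 statements merged into one kernel-verified Lean document; each statement's English description precedes it below -/
import Mathlib

section
/- Let n, m ∈ ℕ, let R ∈ ℝ^{n×m} be a fixed matrix, let L_G > 0, and let G : ℝⁿ → ℝ^{n×m} be L_G-Lipschitz with respect to the operator (spectral) norm on matrices, with G(y) = R·H(y) for all y ∈ ℝⁿ for some H : ℝⁿ → ℝ^{m×m} such that H(0) is invertible and G(0) ≠ 0. Let σ denote the smallest nonzero singular value of G(0). Then for every x ∈ ℝⁿ with L_G·‖x‖ < σ, the column space of G(x) equals the column space of G(0). -/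
/-!
Because `G x = R * H x` with `H 0` invertible, `Im G(x) ⊆ Im R = Im G(0)`. If the inclusion were
strict, pick `u ≠ 0` in `Im G(0)` orthogonal to `Im G(x)` and write `u = G(0) v` with
`v ⊥ ker G(0)`; expanding in an eigenbasis of `G(0)ᵀ G(0)` gives `σ ‖v‖ ≤ ‖u‖`. Then
`‖u‖² = ⟪u, (G(0) - G(x)) v⟫ ≤ ‖u‖ L_G ‖x‖ ‖v‖ < ‖u‖ σ ‖v‖ ≤ ‖u‖²`, a contradiction.
-/

open Matrix Set

noncomputable def matOpNorm {n m : ℕ} (M : Matrix (Fin n) (Fin m) ℝ) : ℝ :=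
  ‖LinearMap.toContinuousLinearMap (Matrix.toEuclideanLin M)‖

noncomputable def appMat {n m : ℕ} (M : Matrix (Fin n) (Fin m) ℝ)
    (v : EuclideanSpace ℝ (Fin m)) : EuclideanSpace ℝ (Fin n) :=
  Matrix.toEuclideanLin M v

noncomputable def colSpace {n m : ℕ} (M : Matrix (Fin n) (Fin m) ℝ) :
    Submodule ℝ (EuclideanSpace ℝ (Fin n)) :=
  LinearMap.range (Matrix.toEuclideanLin M)

noncomputable def minSV {n m : ℕ} (M : Matrix (Fin n) (Fin m) ℝ) : ℝ :=
  Real.sqrt (sInf {μ : ℝ | μ ≠ 0 ∧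
    ∃ i, (Matrix.isHermitian_conjTranspose_mul_self M).eigenvalues i = μ})

theorem LinearMap.range_eq_of_le_of_norm_sub_apply_le
    {E F : Type*} [NormedAddCommGroup E] [NormedAddCommGroup F] [InnerProductSpace ℝ F]
    [FiniteDimensional ℝ F] [Module ℝ E] (A B : E →ₗ[ℝ] F) {δ σ : ℝ}
    (hle : range A ≤ range B) (hB : ∀ u ∈ range B, ∃ v, B v = u ∧ σ * ‖v‖ ≤ ‖u‖)
    (hAB : ∀ v, ‖B v - A v‖ ≤ δ * ‖v‖) (hδσ : δ < σ) :
    range A = range B := by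
  by_contra hne
  obtain ⟨u, ⟨hu_perp, hu_mem⟩, hu0⟩ : ∃ u ∈ (range A)ᗮ ⊓ range B, u ≠ 0 := by
    refine (Submodule.ne_bot_iff _).mp fun h => hne ?_
    simpa [h] using Submodule.sup_orthogonal_inf_of_hasOrthogonalProjection hle
  obtain ⟨v, rfl, hv⟩ := hB u hu_mem
  have hv0 : 0 < ‖v‖ := norm_pos_iff.mpr (by rintro rfl; simp at hu0)
  have hu : 0 < ‖B v‖ := norm_pos_iff.mpr hu0
  have h_inner : ‖B v‖ ^ 2 = inner ℝ (B v) (B v - A v) := by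
    rw [inner_sub_right, real_inner_self_eq_norm_sq, real_inner_comm,
      hu_perp _ (mem_range_self A v), sub_zero]
  have : ‖B v‖ ^ 2 < ‖B v‖ ^ 2 := calc
    ‖B v‖ ^ 2 ≤ ‖B v‖ * ‖B v - A v‖ := h_inner ▸ real_inner_le_norm _ _
    _ ≤ ‖B v‖ * (δ * ‖v‖) := by gcongr; exact hAB v
    _ < ‖B v‖ * (σ * ‖v‖) := by gcongr
    _ ≤ ‖B v‖ ^ 2 := by rw [sq]; gcongr
  exact this.false

namespace Matrix.IsHermitian

variable {ι : Type*} [Fintype ι] [DecidableEq ι] {A : Matrix ι ι ℝ} (hA : A.IsHermitian)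

theorem repr_toEuclideanLin_apply (v : EuclideanSpace ℝ ι) (i : ι) :
    hA.eigenvectorBasis.repr (toEuclideanLin A v) i =
      hA.eigenvalues i * hA.eigenvectorBasis.repr v i := by
  have hEig : toEuclideanLin A (hA.eigenvectorBasis i) = hA.eigenvalues i • hA.eigenvectorBasis i :=
    congrArg (WithLp.toLp 2) (hA.mulVec_eigenvectorBasis i)
  rw [OrthonormalBasis.repr_apply_apply, OrthonormalBasis.repr_apply_apply,
    ← isSymmetric_toEuclideanLin_iff.mpr hA, hEig, real_inner_smul_left]

theorem inner_toEuclideanLin_self (v : EuclideanSpace ℝ ι) :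
    inner ℝ v (toEuclideanLin A v) =
      ∑ i, hA.eigenvalues i * hA.eigenvectorBasis.repr v i ^ 2 := by
  rw [← hA.eigenvectorBasis.repr.inner_map_map, PiLp.inner_apply]
  refine Finset.sum_congr rfl fun i _ => ?_
  rw [hA.repr_toEuclideanLin_apply]
  simp only [RCLike.inner_apply, conj_trivial]
  ring

end Matrix.IsHermitian

theorem Matrix.norm_toEuclideanLin_sq {ι κ : Type*} [Fintype ι] [DecidableEq ι] [Fintype κ]
    [DecidableEq κ] (M : Matrix ι κ ℝ) (v : EuclideanSpace ℝ κ) :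
    ‖toEuclideanLin M v‖ ^ 2 = inner ℝ v (toEuclideanLin (Mᴴ * M) v) := by
  rw [← real_inner_self_eq_norm_sq, toLpLin_mul_same, toEuclideanLin_conjTranspose_eq_adjoint]
  simp [LinearMap.adjoint_inner_right]

section minSV

variable {n m : ℕ} (M : Matrix (Fin n) (Fin m) ℝ)

theorem sq_minSV_le_eigenvalue {i : Fin m}
    (hi : (isHermitian_conjTranspose_mul_self M).eigenvalues i ≠ 0) :
    minSV M ^ 2 ≤ (isHermitian_conjTranspose_mul_self M).eigenvalues i := by
  set S := {μ : ℝ | μ ≠ 0 ∧ ∃ i, (isHermitian_conjTranspose_mul_self M).eigenvalues i = μ}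
  have hmem : _ ∈ S := ⟨hi, i, rfl⟩
  have hlb : 0 ∈ lowerBounds S := by
    rintro _ ⟨-, j, rfl⟩
    exact (posSemidef_conjTranspose_mul_self M).eigenvalues_nonneg j
  rw [minSV, Real.sq_sqrt (le_csInf ⟨_, hmem⟩ hlb)]
  exact csInf_le ⟨0, hlb⟩ hmem

theorem exists_preimage_minSV_mul_norm_le {u : EuclideanSpace ℝ (Fin n)} (hu : u ∈ colSpace M) :
    ∃ v, toEuclideanLin M v = u ∧ minSV M * ‖v‖ ≤ ‖u‖ := by
  obtain ⟨w, rfl⟩ := hu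
  set hMM := isHermitian_conjTranspose_mul_self M
  set μ := hMM.eigenvalues
  set e := hMM.eigenvectorBasis
  have norm_sq (v) : ‖toEuclideanLin M v‖ ^ 2 = ∑ i, μ i * e.repr v i ^ 2 := by
    rw [norm_toEuclideanLin_sq, hMM.inner_toEuclideanLin_self]
  -- `v` is the component of `w` orthogonal to the kernel of `M`
  set v := e.repr.symm (WithLp.toLp 2 fun i => if μ i = 0 then 0 else e.repr w i)
  have hv (i) : e.repr v i = if μ i = 0 then 0 else e.repr w i := by simp [v]
  have hMv : toEuclideanLin M v = toEuclideanLin M w := by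
    rw [← sub_eq_zero, ← map_sub, ← norm_eq_zero, ← sq_eq_zero_iff, norm_sq]
    refine Finset.sum_eq_zero fun i _ => ?_
    by_cases h : μ i = 0 <;> simp [hv, h]
  refine ⟨v, hMv, ?_⟩
  rw [← hMv]
  have hσ : 0 ≤ minSV M := Real.sqrt_nonneg _
  refine (pow_le_pow_iff_left₀ (by positivity) (norm_nonneg _) two_ne_zero).mp ?_
  rw [norm_sq, mul_pow, ← e.repr.norm_map, EuclideanSpace.norm_sq_eq, Finset.mul_sum]
  refine Finset.sum_le_sum fun i _ => ?_
  rw [Real.norm_eq_abs, sq_abs]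
  by_cases h : μ i = 0
  · simp [hv, h]
  · exact mul_le_mul_of_nonneg_right (sq_minSV_le_eigenvalue M h) (sq_nonneg _)

end minSV

theorem norm_toEuclideanLin_apply_le_matOpNorm {n m : ℕ} (M : Matrix (Fin n) (Fin m) ℝ)
    (v : EuclideanSpace ℝ (Fin m)) : ‖toEuclideanLin M v‖ ≤ matOpNorm M * ‖v‖ :=
  (LinearMap.toContinuousLinearMap (toEuclideanLin M)).le_opNorm v

theorem colSpace_mul_le {n m k : ℕ} (A : Matrix (Fin n) (Fin m) ℝ) (B : Matrix (Fin m) (Fin k) ℝ) :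
    colSpace (A * B) ≤ colSpace A := by
  rw [colSpace, toLpLin_mul_same]
  exact LinearMap.range_comp_le_range _ _

theorem colSpace_mul_of_isUnit {n m : ℕ} (A : Matrix (Fin n) (Fin m) ℝ)
    {B : Matrix (Fin m) (Fin m) ℝ} (hB : IsUnit B) : colSpace (A * B) = colSpace A := by
  have hB' : LinearMap.range (toEuclideanLin B) = ⊤ := LinearMap.range_eq_top.mpr
    ((Module.End.isUnit_iff _).mp (hB.map (toLpLinAlgEquiv 2))).surjective
  rw [colSpace, toLpLin_mul_same, LinearMap.range_comp_of_range_eq_top _ hB', colSpace]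

theorem lemma1_image_equality_general {n m : ℕ} (R : Matrix (Fin n) (Fin m) ℝ) (LG : ℝ)
    (G : EuclideanSpace ℝ (Fin n) → Matrix (Fin n) (Fin m) ℝ)
    (hLip : ∀ y z, matOpNorm (G y - G z) ≤ LG * ‖y - z‖)
    (H : EuclideanSpace ℝ (Fin n) → Matrix (Fin m) (Fin m) ℝ)
    (hfac : ∀ y, G y = R * H y)
    (hH0 : IsUnit (H 0))
    (x : EuclideanSpace ℝ (Fin n)) (hx : LG * ‖x‖ < minSV (G 0)) :
    colSpace (G x) = colSpace (G 0) := by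
  have hle : colSpace (G x) ≤ colSpace (G 0) := by
    rw [hfac x, hfac 0, colSpace_mul_of_isUnit R hH0]
    exact colSpace_mul_le R (H x)
  refine LinearMap.range_eq_of_le_of_norm_sub_apply_le _ _ hle
    (fun u hu => exists_preimage_minSV_mul_norm_le (G 0) hu) (fun v => ?_) hx
  calc ‖toEuclideanLin (G 0) v - toEuclideanLin (G x) v‖
      ≤ matOpNorm (G 0 - G x) * ‖v‖ := by
        simpa using norm_toEuclideanLin_apply_le_matOpNorm (G 0 - G x) v
    _ ≤ LG * ‖x‖ * ‖v‖ := by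
        gcongr
        simpa using hLip 0 x

/-- **Lemma 1.** If `G` is `L_G`-Lipschitz in the operator norm,
`G y = R * H y` with `H 0` invertible and `G 0 ≠ 0`, then for every `x` with
`L_G * ‖x‖ <` (smallest nonzero singular value of `G 0`), the column space of
`G x` equals the column space of `G 0`. -/
theorem lemma1_image_equality {n m : ℕ} (R : Matrix (Fin n) (Fin m) ℝ) (LG : ℝ)
    (hLG : 0 < LG)
    (G : EuclideanSpace ℝ (Fin n) → Matrix (Fin n) (Fin m) ℝ)
    (hLip : ∀ y z, matOpNorm (G y - G z) ≤ LG * ‖y - z‖)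
    (H : EuclideanSpace ℝ (Fin n) → Matrix (Fin m) (Fin m) ℝ)
    (hfac : ∀ y, G y = R * H y)
    (hH0 : IsUnit (H 0)) (hG0 : G 0 ≠ 0)
    (x : EuclideanSpace ℝ (Fin n)) (hx : LG * ‖x‖ < minSV (G 0)) :
    colSpace (G x) = colSpace (G 0) :=
  lemma1_image_equality_general R LG G hLip H hfac hH0 x hx
end

section
/- Let R ∈ ℝ^{n×m}, L_G > 0, x ∈ ℝⁿ with x ≠ 0, let H₀ ∈ ℝ^{m×m} be invertible, set G₀ = R·H₀, and let B ∈ ℝ^{n×m} satisfy ‖B − G₀‖ ≤ L_G·‖x‖ (operator norm) and B = R·P for some P ∈ ℝ^{m×m}. Then there exist Ĝ : ℝⁿ → ℝ^{n×m} and Ĥ : ℝⁿ → ℝ^{m×m} such that Ĝ is L_G-Lipschitz with respect to the operator norm, Ĝ(0) = G₀, Ĝ(x) = B, Ĥ(0) = H₀ is invertible, and Ĝ(y) = R·Ĥ(y) for all y ∈ ℝⁿ. -/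
open Matrix Set

/-!
Interpolate affinely along the direction of `x`: with `φ y = ⟪y, x⟫ / ‖x‖²`, which is
`‖x‖⁻¹`-Lipschitz and satisfies `φ 0 = 0`, `φ x = 1`, put `Ĝ y = G₀ + φ y • (B - G₀)` and
`Ĥ y = H₀ + φ y • (P - H₀)`. Then `Ĝ` is `‖B - G₀‖ / ‖x‖ ≤ L_G`-Lipschitz, and
`Ĝ = R Ĥ` because left multiplication by `R` is linear.
-/

open AffineMap

section coordAlong

variable {E : Type*} [NormedAddCommGroup E] [InnerProductSpace ℝ E]

noncomputable def coordAlong (x y : E) : ℝ := inner ℝ y x / ‖x‖ ^ 2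

@[simp]
lemma coordAlong_zero_right (x : E) : coordAlong x 0 = 0 := by
  simp [coordAlong]

lemma coordAlong_self {x : E} (hx : x ≠ 0) : coordAlong x x = 1 := by
  rw [coordAlong, real_inner_self_eq_norm_sq, div_self (by positivity)]

lemma dist_coordAlong_le (x y z : E) :
    dist (coordAlong x y) (coordAlong x z) ≤ ‖x‖⁻¹ * dist y z := by
  rcases eq_or_ne x 0 with rfl | hx
  · simp [coordAlong]
  have hx' : 0 < ‖x‖ := norm_pos_iff.mpr hx
  calc dist (coordAlong x y) (coordAlong x z) = |inner ℝ (y - z) x| / ‖x‖ ^ 2 := by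
        rw [Real.dist_eq, coordAlong, coordAlong, ← sub_div, ← inner_sub_left, abs_div,
          abs_of_nonneg (sq_nonneg ‖x‖)]
    _ ≤ ‖y - z‖ * ‖x‖ / ‖x‖ ^ 2 := by gcongr; exact abs_real_inner_le_norm _ _
    _ = ‖x‖⁻¹ * dist y z := by rw [dist_eq_norm]; field_simp

lemma dist_lineMap_coordAlong_le {V P : Type*} [SeminormedAddCommGroup V] [NormedSpace ℝ V]
    [PseudoMetricSpace P] [NormedAddTorsor V P] (p₀ p₁ : P) {x : E} (hx : x ≠ 0) {L : ℝ} (hL : dist p₀ p₁ ≤ L * ‖x‖) (y z : E) :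
    dist (lineMap p₀ p₁ (coordAlong x y)) (lineMap p₀ p₁ (coordAlong x z)) ≤ L * dist y z := by
  have hL' : dist p₀ p₁ * ‖x‖⁻¹ ≤ L := by
    rwa [← div_eq_mul_inv, div_le_iff₀ (norm_pos_iff.mpr hx)]
  calc dist (lineMap p₀ p₁ (coordAlong x y)) (lineMap p₀ p₁ (coordAlong x z))
      = dist (coordAlong x y) (coordAlong x z) * dist p₀ p₁ := dist_lineMap_lineMap _ _ _ _
    _ ≤ ‖x‖⁻¹ * dist y z * dist p₀ p₁ := by gcongr; exact dist_coordAlong_le x y z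
    _ = dist p₀ p₁ * ‖x‖⁻¹ * dist y z := by ring
    _ ≤ L * dist y z := by gcongr

end coordAlong

lemma Matrix.mul_lineMap {l m n α : Type*} [Fintype m] [CommRing α] (R : Matrix l m α)
    (A B : Matrix m n α) (c : α) :
    R * lineMap A B c = lineMap (R * A) (R * B) c := by
  simp only [lineMap_apply_module', Matrix.mul_add, Matrix.mul_smul, Matrix.mul_sub]

section L2OpNorm

open scoped Matrix.Norms.L2Operator

lemma matOpNorm_eq_l2_opNorm {n m : ℕ} (M : Matrix (Fin n) (Fin m) ℝ) : matOpNorm M = ‖M‖ :=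
  rfl

lemma matOpNorm_lineMap_coordAlong_sub_le {n m : ℕ} {E : Type*} [NormedAddCommGroup E]
    [InnerProductSpace ℝ E] (A B : Matrix (Fin n) (Fin m) ℝ) {x : E} (hx : x ≠ 0) {L : ℝ}
    (hAB : matOpNorm (B - A) ≤ L * ‖x‖) (y z : E) :
    matOpNorm (lineMap A B (coordAlong x y) - lineMap A B (coordAlong x z)) ≤ L * ‖y - z‖ := by
  rw [matOpNorm_eq_l2_opNorm, ← dist_eq_norm, dist_comm] at hAB
  rw [matOpNorm_eq_l2_opNorm, ← dist_eq_norm, ← dist_eq_norm]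
  exact dist_lineMap_coordAlong_le A B hx hAB y z

end L2OpNorm

theorem exists_lipschitz_matrix_interpolant_general {n m : ℕ}
    (R : Matrix (Fin n) (Fin m) ℝ) (LG : ℝ)
    (x : EuclideanSpace ℝ (Fin n)) (hx : x ≠ 0)
    (H₀ : Matrix (Fin m) (Fin m) ℝ) (hH₀ : IsUnit H₀)
    (G₀ : Matrix (Fin n) (Fin m) ℝ) (hG₀ : G₀ = R * H₀)
    (B : Matrix (Fin n) (Fin m) ℝ) (hBclose : matOpNorm (B - G₀) ≤ LG * ‖x‖)
    (P : Matrix (Fin m) (Fin m) ℝ) (hBfac : B = R * P) :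
    ∃ (Gh : EuclideanSpace ℝ (Fin n) → Matrix (Fin n) (Fin m) ℝ)
      (Hh : EuclideanSpace ℝ (Fin n) → Matrix (Fin m) (Fin m) ℝ),
      (∀ y z, matOpNorm (Gh y - Gh z) ≤ LG * ‖y - z‖) ∧
      Gh 0 = G₀ ∧ Gh x = B ∧ Hh 0 = H₀ ∧ IsUnit (Hh 0) ∧
      ∀ y, Gh y = R * Hh y := by
  refine ⟨fun y => lineMap G₀ B (coordAlong x y), fun y => lineMap H₀ P (coordAlong x y),
    matOpNorm_lineMap_coordAlong_sub_le G₀ B hx hBclose, ?_, ?_, ?_, ?_, fun y => ?_⟩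
  · simp only [coordAlong_zero_right, lineMap_apply_zero]
  · simp only [coordAlong_self hx, lineMap_apply_one]
  · simp only [coordAlong_zero_right, lineMap_apply_zero]
  · simpa only [coordAlong_zero_right, lineMap_apply_zero] using hH₀
  · rw [hG₀, hBfac, Matrix.mul_lineMap]

/-- Given `G₀ = R H₀` with `H₀` invertible and a matrix `B = R P`
with `‖B − G₀‖ ≤ L_G‖x‖` (operator norm), `x ≠ 0`, there are `Ĝ`, `Ĥ` with `Ĝ`
`L_G`-Lipschitz in the operator norm, `Ĝ 0 = G₀`, `Ĝ x = B`, `Ĥ 0 = H₀` (which is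
invertible), and `Ĝ y = R Ĥ y` for all `y`. -/
theorem exists_lipschitz_matrix_interpolant {n m : ℕ}
    (R : Matrix (Fin n) (Fin m) ℝ) (LG : ℝ) (hLG : 0 < LG)
    (x : EuclideanSpace ℝ (Fin n)) (hx : x ≠ 0)
    (H₀ : Matrix (Fin m) (Fin m) ℝ) (hH₀ : IsUnit H₀)
    (G₀ : Matrix (Fin n) (Fin m) ℝ) (hG₀ : G₀ = R * H₀)
    (B : Matrix (Fin n) (Fin m) ℝ) (hBclose : matOpNorm (B - G₀) ≤ LG * ‖x‖)
    (P : Matrix (Fin m) (Fin m) ℝ) (hBfac : B = R * P) :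
    ∃ (Gh : EuclideanSpace ℝ (Fin n) → Matrix (Fin n) (Fin m) ℝ)
      (Hh : EuclideanSpace ℝ (Fin n) → Matrix (Fin m) (Fin m) ℝ),
      (∀ y z, matOpNorm (Gh y - Gh z) ≤ LG * ‖y - z‖) ∧
      Gh 0 = G₀ ∧ Gh x = B ∧ Hh 0 = H₀ ∧ IsUnit (Hh 0) ∧
      ∀ y, Gh y = R * Hh y :=
  exists_lipschitz_matrix_interpolant_general R LG x hx H₀ hH₀ G₀ hG₀ B hBclose P hBfac
end
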